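/- arXiv:2111.05508 — 5 statements merged into one kernel-verified Lean document; each statement's English description precedes it below -/
import Mathlib

section
/- Consider the bilinear game V(θ,φ) = θᵀAφ with A ∈ ℝ^{d×d} full rank (nonsingular). Define the Optimistic Mirror Descent dynamics θ_{t+1} = θ_t − 2η·Aφ_t + η·Aφ_{t−1} and φ_{t+1} = φ_t + 2η·Aᵀθ_t − η·Aᵀθ_{t−1}, with learning rate η = 1/(2√(2·λ_max(AAᵀ))). Suppose ‖(θ_0,φ_0)‖ ≤ δ and ‖(θ_1,φ_1)‖ ≤ δ. Then for every T ≥ ⌈16·(λ_max(AAᵀ)/λ_min(AAᵀ))·log(4√2·δ/ε)⌉ the iterate satisfies ‖(θ_T,φ_T)‖ ≤ ε, i.e. (θ_T,φ_T) lies in the Euclidean ball of radius ε around the origin. -/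
/-!
Let `u j` be an orthonormal eigenbasis of `A Aᵀ`, with eigenvalues `σ j ^ 2 > 0`, and
`v j = (σ j)⁻¹ • Aᵀ u j`; then `v` is orthonormal too, `Aᵀ u j = σ j • v j` and `A v j = σ j • u j`.
In the complex coordinates `w j = ⟪u j, θ⟫ + ⟪v j, φ⟫ i` the OMD dynamics decouples into the
scalar recurrences `w (t + 2) = (1 + 2ai) w (t + 1) - ai w t` with `a = η σ j`, `8a² ≤ 1`.
Their characteristic roots `(1 ± s) / 2 + ai`, `s = √(1 - 4a²)`, have modulus at most `√(1 - a²)`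
and differ by `s ≥ 1/√2`, so `|w T|² ≤ 16 (1 - a²) ^ T (|w 0|² + |w 1|²)`. Summing over `j`
(Parseval in both bases) gives `‖(θ T, φ T)‖² ≤ 32 δ² (1 - λ_min / (8 λ_max)) ^ T ≤ ε²`.
-/

open Matrix Complex

theorem two_step_recurrence_closed_form {R : Type*} [CommRing R] (α β : R) (w : ℕ → R)
    (hw : ∀ t, w (t + 2) = (α + β) * w (t + 1) - α * β * w t) (t : ℕ) :
    (α - β) * w t = α ^ t * (w 1 - β * w 0) - β ^ t * (w 1 - α * w 0) := by
  induction t using Nat.twoStepInduction with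
  | zero => ring
  | one => ring
  | more t ih₀ ih₁ =>
    linear_combination (α - β) * hw t + (α + β) * ih₁ - α * β * ih₀

theorem norm_sub_mul_norm_le_of_two_step_recurrence {K : Type*} [NormedField K] {α β : K}
    {ρ : ℝ} (hα : ‖α‖ ≤ ρ) (hβ : ‖β‖ ≤ ρ) (hρ : ρ ≤ 1) (w : ℕ → K)
    (hw : ∀ t, w (t + 2) = (α + β) * w (t + 1) - α * β * w t) (t : ℕ) :
    ‖α - β‖ * ‖w t‖ ≤ 2 * ρ ^ t * (‖w 0‖ + ‖w 1‖) := by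
  have hρ₀ : 0 ≤ ρ := (norm_nonneg α).trans hα
  have hterm (γ δ : K) (hγ : ‖γ‖ ≤ ρ) (hδ : ‖δ‖ ≤ ρ) :
      ‖γ ^ t * (w 1 - δ * w 0)‖ ≤ ρ ^ t * (‖w 0‖ + ‖w 1‖) := by
    rw [norm_mul, norm_pow]
    gcongr
    calc ‖w 1 - δ * w 0‖ ≤ ‖w 1‖ + ‖δ‖ * ‖w 0‖ := by
          simpa only [norm_mul] using norm_sub_le (w 1) (δ * w 0)
      _ ≤ ‖w 0‖ + ‖w 1‖ := by nlinarith [norm_nonneg (w 0)]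
  rw [← norm_mul, two_step_recurrence_closed_form α β w hw t]
  linarith [norm_sub_le (α ^ t * (w 1 - β * w 0)) (β ^ t * (w 1 - α * w 0)),
    hterm α β hα hβ, hterm β α hβ hα]

theorem norm_sq_le_of_omd_recurrence {σ : ℝ} (hσ : 8 * σ ^ 2 ≤ 1) (w : ℕ → ℂ)
    (hw : ∀ t, w (t + 2) = (1 + 2 * σ * I) * w (t + 1) - σ * I * w t) (t : ℕ) :
    ‖w t‖ ^ 2 ≤ 16 * (1 - σ ^ 2) ^ t * (‖w 0‖ ^ 2 + ‖w 1‖ ^ 2) := by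
  obtain ⟨s, hs₀, hs⟩ : ∃ s : ℝ, 0 ≤ s ∧ s ^ 2 = 1 - 4 * σ ^ 2 :=
    ⟨_, Real.sqrt_nonneg _, Real.sq_sqrt (by nlinarith)⟩
  have hs' : (s : ℂ) ^ 2 = 1 - 4 * (σ : ℂ) ^ 2 := by exact_mod_cast hs
  -- the roots of `r ^ 2 - (1 + 2σi) r + σi`
  set α : ℂ := ((1 + s) / 2 : ℝ) + σ * I
  set β : ℂ := ((1 - s) / 2 : ℝ) + σ * I
  have hw' : ∀ t, w (t + 2) = (α + β) * w (t + 1) - α * β * w t := by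
    have hsum : α + β = 1 + 2 * σ * I := by push_cast [α, β]; ring
    have hprod : α * β = σ * I := by
      push_cast [α, β]; linear_combination (-1 / 4 : ℂ) * hs' + (σ : ℂ) ^ 2 * I_sq
    simpa only [hsum, hprod] using hw
  have hnorm (x : ℝ) (hx : (x / 2) ^ 2 + σ ^ 2 ≤ 1 - σ ^ 2) :
      ‖((x / 2 : ℝ) : ℂ) + σ * I‖ ≤ √(1 - σ ^ 2) := by
    rw [norm_add_mul_I]
    exact Real.sqrt_le_sqrt hx
  have hα : ‖α‖ ≤ √(1 - σ ^ 2) := hnorm (1 + s) (by nlinarith)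
  have hβ : ‖β‖ ≤ √(1 - σ ^ 2) := hnorm (1 - s) (by nlinarith)
  have hαβ : ‖α - β‖ = s := by
    have : α - β = s := by push_cast [α, β]; ring
    rw [this, Complex.norm_real, Real.norm_of_nonneg hs₀]
  have hbound := norm_sub_mul_norm_le_of_two_step_recurrence hα hβ
    (Real.sqrt_le_one.mpr (by nlinarith)) w hw' t
  rw [hαβ] at hbound
  have hρ : (√(1 - σ ^ 2) ^ t) ^ 2 = (1 - σ ^ 2) ^ t := by
    rw [← pow_mul, mul_comm, pow_mul, Real.sq_sqrt (by nlinarith)]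
  calc ‖w t‖ ^ 2 ≤ 2 * (s * ‖w t‖) ^ 2 := by nlinarith [sq_nonneg ‖w t‖]
    _ ≤ 2 * (2 * √(1 - σ ^ 2) ^ t * (‖w 0‖ + ‖w 1‖)) ^ 2 := by gcongr
    _ ≤ 16 * (1 - σ ^ 2) ^ t * (‖w 0‖ ^ 2 + ‖w 1‖ ^ 2) := by
      rw [mul_pow, mul_pow, hρ]
      nlinarith [sq_nonneg (‖w 0‖ - ‖w 1‖), pow_nonneg (by nlinarith : 0 ≤ 1 - σ ^ 2) t]

theorem one_sub_pow_le_inv_of_log_le {c x : ℝ} (hc : c ≤ 1) (hx : 0 < x) {T : ℕ}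
    (hT : Real.log x ≤ c * T) : (1 - c) ^ T ≤ x⁻¹ := by
  calc (1 - c) ^ T ≤ Real.exp (-c) ^ T := by
        gcongr
        linarith [Real.add_one_le_exp (-c)]
    _ = Real.exp (-(c * T)) := by rw [← Real.exp_nat_mul]; ring_nf
    _ ≤ Real.exp (-Real.log x) := by gcongr
    _ = x⁻¹ := by rw [Real.exp_neg, Real.exp_log hx]

namespace Matrix

variable {n : Type*} [Fintype n] [DecidableEq n]

theorem posDef_mul_transpose_self (A : Matrix n n ℝ) (hA : A.det ≠ 0) : (A * Aᵀ).PosDef := by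
  simpa using PosDef.mul_conjTranspose_self A
    (vecMul_injective_iff_isUnit.mpr ((isUnit_iff_isUnit_det A).mpr hA.isUnit))

theorem PosDef.pos_of_mem_spectrum {A : Matrix n n ℝ} (hA : A.PosDef) {r : ℝ}
    (hr : r ∈ spectrum ℝ A) : 0 < r := by
  obtain ⟨j, rfl⟩ := hA.1.spectrum_real_eq_range_eigenvalues ▸ hr
  exact hA.eigenvalues_pos j

theorem inner_toEuclideanLin_right (A : Matrix n n ℝ) (x y : EuclideanSpace ℝ n) :
    inner ℝ x (toEuclideanLin A y) = inner ℝ (toEuclideanLin Aᵀ x) y := by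
  rw [← conjTranspose_eq_transpose_of_trivial, toEuclideanLin_conjTranspose_eq_adjoint,
    LinearMap.adjoint_inner_left]

theorem exists_singular_orthonormalBasis_pair (A : Matrix n n ℝ) (hA : A.det ≠ 0) :
    ∃ (u v : OrthonormalBasis n ℝ (EuclideanSpace ℝ n)) (σ : n → ℝ),
      (∀ j, σ j ^ 2 ∈ spectrum ℝ (A * Aᵀ)) ∧
      (∀ j, toEuclideanLin Aᵀ (u j) = σ j • v j) ∧
      (∀ j, toEuclideanLin A (v j) = σ j • u j) := by
  have hG := posDef_mul_transpose_self A hA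
  set u := hG.1.eigenvectorBasis
  set μ := hG.1.eigenvalues
  have hμ j : 0 < μ j := hG.eigenvalues_pos j
  set σ : n → ℝ := fun j ↦ √(μ j)
  have hσ j : σ j ^ 2 = μ j := Real.sq_sqrt (hμ j).le
  have hσ₀ j : σ j ≠ 0 := (Real.sqrt_pos.mpr (hμ j)).ne'
  have hAAu j : toEuclideanLin A (toEuclideanLin Aᵀ (u j)) = μ j • u j := by
    apply WithLp.ofLp_injective
    simpa [toLpLin_apply, mulVec_mulVec] using hG.1.mulVec_eigenvectorBasis j
  set v : n → EuclideanSpace ℝ n := fun j ↦ (σ j)⁻¹ • toEuclideanLin Aᵀ (u j)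
  have hv : Orthonormal ℝ v := by
    rw [orthonormal_iff_ite]
    intro i j
    simp only [v, real_inner_smul_left, real_inner_smul_right, ← inner_toEuclideanLin_right, hAAu,
      u.inner_eq_ite]
    split_ifs with h
    · subst h; rw [← hσ]; field_simp [hσ₀ i]
    · simp
  have hcard : Fintype.card n = Module.finrank ℝ (EuclideanSpace ℝ n) := by simp
  let v' := OrthonormalBasis.mk hv (hv.linearIndependent.span_eq_top_of_card_eq_finrank' hcard).ge
  refine ⟨u, v', σ, fun j ↦ hσ j ▸ hG.1.eigenvalues_mem_spectrum_real j, fun j ↦ ?_, fun j ↦ ?_⟩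
  · simp [v', v, smul_smul, hσ₀]
  · simp only [v', v, OrthonormalBasis.coe_mk, map_smul, hAAu, smul_smul, ← hσ]
    congr 1; field_simp [hσ₀ j]

end Matrix

section OMD

variable {n : Type*} [Fintype n] [DecidableEq n]

def IsOMDTrajectory (A : Matrix n n ℝ) (η : ℝ) (θ φ : ℕ → EuclideanSpace ℝ n) : Prop :=
  ∀ t, θ (t + 2) = θ (t + 1) - (2 * η) • toEuclideanLin A (φ (t + 1)) + η • toEuclideanLin A (φ t) ∧
    φ (t + 2) = φ (t + 1) + (2 * η) • toEuclideanLin Aᵀ (θ (t + 1)) - η • toEuclideanLin Aᵀ (θ t)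

theorem sum_norm_sq_inner_add_inner_mul_I {E ι : Type*} [NormedAddCommGroup E]
    [InnerProductSpace ℝ E] [Fintype ι] (u v : OrthonormalBasis ι ℝ E) (x y : E) :
    ∑ j, ‖(inner ℝ (u j) x + inner ℝ (v j) y * I : ℂ)‖ ^ 2 = ‖x‖ ^ 2 + ‖y‖ ^ 2 := by
  rw [← u.sum_sq_norm_inner_right x, ← v.sum_sq_norm_inner_right y, ← Finset.sum_add_distrib]
  congr with j
  rw [Complex.sq_norm, normSq_add_mul_I, Real.norm_eq_abs, Real.norm_eq_abs, sq_abs, sq_abs]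

namespace IsOMDTrajectory

variable {A : Matrix n n ℝ} {η : ℝ} {θ φ : ℕ → EuclideanSpace ℝ n}

theorem coord_recurrence (h : IsOMDTrajectory A η θ φ) {u v : EuclideanSpace ℝ n} {σ : ℝ}
    (hu : toEuclideanLin Aᵀ u = σ • v) (hv : toEuclideanLin A v = σ • u) (t : ℕ) :
    let w : ℕ → ℂ := fun t ↦ inner ℝ u (θ t) + inner ℝ v (φ t) * I
    w (t + 2) = (1 + 2 * (η * σ : ℝ) * I) * w (t + 1) - (η * σ : ℝ) * I * w t := by
  have hAu (x) : inner ℝ u (toEuclideanLin A x) = σ * inner ℝ v x := by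
    rw [inner_toEuclideanLin_right, hu, real_inner_smul_left]
  have hAv (x) : inner ℝ v (toEuclideanLin Aᵀ x) = σ * inner ℝ u x := by
    rw [inner_toEuclideanLin_right, transpose_transpose, hv, real_inner_smul_left]
  obtain ⟨hθ, hφ⟩ := h t
  simp only [hθ, hφ, inner_add_right, inner_sub_right, real_inner_smul_right, hAu, hAv]
  push_cast
  linear_combination (η * σ * inner ℝ v (φ t) - 2 * η * σ * inner ℝ v (φ (t + 1)) : ℂ) * I_sq

theorem norm_sq_le (h : IsOMDTrajectory A η θ φ) (hA : A.det ≠ 0) {lmin lmax : ℝ}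
    (hlmin : lmin ∈ lowerBounds (spectrum ℝ (A * Aᵀ)))
    (hlmax : lmax ∈ upperBounds (spectrum ℝ (A * Aᵀ))) (hη : 8 * η ^ 2 * lmax ≤ 1) (T : ℕ) :
    ‖θ T‖ ^ 2 + ‖φ T‖ ^ 2 ≤
      16 * (1 - η ^ 2 * lmin) ^ T * (‖θ 0‖ ^ 2 + ‖φ 0‖ ^ 2 + (‖θ 1‖ ^ 2 + ‖φ 1‖ ^ 2)) := by
  obtain ⟨u, v, σ, hσ, hu, hv⟩ := A.exists_singular_orthonormalBasis_pair hA
  rw [← sum_norm_sq_inner_add_inner_mul_I u v (θ T), ← sum_norm_sq_inner_add_inner_mul_I u v (θ 0),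
    ← sum_norm_sq_inner_add_inner_mul_I u v (θ 1), ← Finset.sum_add_distrib, Finset.mul_sum]
  refine Finset.sum_le_sum fun j _ ↦ ?_
  have hσ_le : 8 * (η * σ j) ^ 2 ≤ 1 := by
    nlinarith [hlmax (hσ j), sq_nonneg η]
  have hσ_ge : η ^ 2 * lmin ≤ (η * σ j) ^ 2 := by
    nlinarith [hlmin (hσ j), sq_nonneg η]
  calc _ ≤ _ := norm_sq_le_of_omd_recurrence hσ_le
        (fun t ↦ inner ℝ (u j) (θ t) + inner ℝ (v j) (φ t) * I) (h.coord_recurrence (hu j) (hv j)) T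
    _ ≤ _ := by gcongr; linarith

end IsOMDTrajectory

end OMD

theorem stmt1_general (d : ℕ) (A : Matrix (Fin d) (Fin d) ℝ) (hA : A.det ≠ 0)
    (lmax lmin : ℝ)
    (hlmax : IsGreatest (spectrum ℝ (A * Aᵀ)) lmax)
    (hlmin : IsLeast (spectrum ℝ (A * Aᵀ)) lmin)
    (η δ ε : ℝ) (hη : η = 1 / (2 * Real.sqrt (2 * lmax)))
    (hδ : 0 < δ) (hε : 0 < ε)
    (θ φ : ℕ → EuclideanSpace ℝ (Fin d))
    (hθ : ∀ t : ℕ, 1 ≤ t →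
      θ (t + 1) = θ t - (2 * η) • (WithLp.equiv 2 (Fin d → ℝ)).symm
          (A.mulVec (WithLp.equiv 2 (Fin d → ℝ) (φ t)))
        + η • (WithLp.equiv 2 (Fin d → ℝ)).symm
          (A.mulVec (WithLp.equiv 2 (Fin d → ℝ) (φ (t - 1)))))
    (hφ : ∀ t : ℕ, 1 ≤ t →
      φ (t + 1) = φ t + (2 * η) • (WithLp.equiv 2 (Fin d → ℝ)).symm
          (Aᵀ.mulVec (WithLp.equiv 2 (Fin d → ℝ) (θ t)))
        - η • (WithLp.equiv 2 (Fin d → ℝ)).symm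
          (Aᵀ.mulVec (WithLp.equiv 2 (Fin d → ℝ) (θ (t - 1)))))
    (h0 : Real.sqrt (‖θ 0‖ ^ 2 + ‖φ 0‖ ^ 2) ≤ δ)
    (h1 : Real.sqrt (‖θ 1‖ ^ 2 + ‖φ 1‖ ^ 2) ≤ δ)
    (T : ℕ)
    (hT : (⌈16 * (lmax / lmin) * Real.log (4 * Real.sqrt 2 * δ / ε)⌉ : ℤ) ≤ (T : ℤ)) :
    Real.sqrt (‖θ T‖ ^ 2 + ‖φ T‖ ^ 2) ≤ ε := by
  have hlmin_pos : 0 < lmin := (posDef_mul_transpose_self A hA).pos_of_mem_spectrum hlmin.1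
  have hlmax_pos : 0 < lmax := hlmin_pos.trans_le (hlmax.2 hlmin.1)
  have hη_sq : η ^ 2 = 1 / (8 * lmax) := by
    rw [hη, div_pow, mul_pow, Real.sq_sqrt (by positivity)]; ring
  -- `toEuclideanLin A x` unfolds to the `WithLp.equiv` expression of the hypotheses
  have htraj : IsOMDTrajectory A η θ φ := fun t ↦ ⟨hθ (t + 1) (by omega), hφ (t + 1) (by omega)⟩
  have hbound := htraj.norm_sq_le hA hlmin.2 hlmax.2 (by rw [hη_sq]; field_simp; exact le_rfl) T
  have hc : η ^ 2 * lmin * (16 * (lmax / lmin)) = 2 := by rw [hη_sq]; field_simp; norm_num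
  have hdecay : (1 - η ^ 2 * lmin) ^ T ≤ ((4 * √2 * δ / ε) ^ 2)⁻¹ := by
    refine one_sub_pow_le_inv_of_log_le ?_ (by positivity) ?_
    · rw [hη_sq, div_mul_eq_mul_div, div_le_one (by positivity)]; linarith [hlmax.2 hlmin.1]
    · calc Real.log ((4 * √2 * δ / ε) ^ 2)
          = η ^ 2 * lmin * (16 * (lmax / lmin) * Real.log (4 * √2 * δ / ε)) := by
            rw [Real.log_pow]; push_cast; linear_combination -Real.log (4 * √2 * δ / ε) * hc
        _ ≤ η ^ 2 * lmin * T := by gcongr; exact_mod_cast Int.ceil_le.mp hT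
  rw [Real.sqrt_le_left hδ.le] at h0 h1
  rw [Real.sqrt_le_left hε.le]
  calc ‖θ T‖ ^ 2 + ‖φ T‖ ^ 2
      ≤ 16 * ((4 * √2 * δ / ε) ^ 2)⁻¹ * (δ ^ 2 + δ ^ 2) := by grw [hbound, hdecay, h0, h1]
    _ = ε ^ 2 := by field_simp; rw [Real.sq_sqrt zero_le_two]; ring

/-- **OMD for bilinear games.** For the bilinear game `V(θ,φ) = θᵀAφ` with
`A` nonsingular, the Optimistic Mirror Descent dynamics with learning rate
`η = 1/(2√(2 λ_max(AAᵀ)))` and bounded initial iterates reaches the ε-ball around the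
origin after `T ≥ ⌈16 (λ_max/λ_min) log(4√2 δ/ε)⌉` iterations. -/
theorem stmt1 (d : ℕ) (A : Matrix (Fin d) (Fin d) ℝ) (hA : A.det ≠ 0)
    (lmax lmin : ℝ)
    (hlmax : IsGreatest (spectrum ℝ (A * Aᵀ)) lmax)
    (hlmin : IsLeast (spectrum ℝ (A * Aᵀ)) lmin)
    (η δ ε : ℝ) (hη : η = 1 / (2 * Real.sqrt (2 * lmax)))
    (hδ : 0 < δ) (hε : 0 < ε) (hεδ : ε < δ)
    (θ φ : ℕ → EuclideanSpace ℝ (Fin d))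
    (hθ : ∀ t : ℕ, 1 ≤ t →
      θ (t + 1) = θ t - (2 * η) • (WithLp.equiv 2 (Fin d → ℝ)).symm
          (A.mulVec (WithLp.equiv 2 (Fin d → ℝ) (φ t)))
        + η • (WithLp.equiv 2 (Fin d → ℝ)).symm
          (A.mulVec (WithLp.equiv 2 (Fin d → ℝ) (φ (t - 1)))))
    (hφ : ∀ t : ℕ, 1 ≤ t →
      φ (t + 1) = φ t + (2 * η) • (WithLp.equiv 2 (Fin d → ℝ)).symm
          (Aᵀ.mulVec (WithLp.equiv 2 (Fin d → ℝ) (θ t)))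
        - η • (WithLp.equiv 2 (Fin d → ℝ)).symm
          (Aᵀ.mulVec (WithLp.equiv 2 (Fin d → ℝ) (θ (t - 1)))))
    (h0 : Real.sqrt (‖θ 0‖ ^ 2 + ‖φ 0‖ ^ 2) ≤ δ)
    (h1 : Real.sqrt (‖θ 1‖ ^ 2 + ‖φ 1‖ ^ 2) ≤ δ)
    (T : ℕ)
    (hT : (⌈16 * (lmax / lmin) * Real.log (4 * Real.sqrt 2 * δ / ε)⌉ : ℤ) ≤ (T : ℤ)) :
    Real.sqrt (‖θ T‖ ^ 2 + ‖φ T‖ ^ 2) ≤ ε :=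
  stmt1_general d A hA lmax lmin hlmax hlmin η δ ε hη hδ hε θ φ hθ hφ h0 h1 T hT
end

section
/- Let f: ℝⁿ → ℝ be a convex and β-smooth function attaining its minimum at x*. Then the iterates of Nesterov's Accelerated Gradient Descent, defined by y_{t+1} = x_t − (1/β)∇f(x_t) and x_{t+1} = y_{t+1} + ((t−1)/(t+2))·(y_{t+1} − y_t) starting from x_1 = y_1, satisfy f(y_t) − f(x*) ≤ 2β‖x_1 − x*‖²/t² for all t ≥ 1. -/
/-!
With `λ_s = (s + 1)/2` and `u_s = λ_s x_s - (λ_s - 1) y_s - x*`, the potential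
`λ_s² (f y_{s+1} - f x*) + (β/2)‖u_{s+1}‖²` does not increase in `s`. Two facts make this
work: a gradient step `a⁺ = a - ∇f(a)/β` satisfies
`f(a⁺) ≤ f(z) + ⟪∇f(a), a - z⟫ - ‖∇f(a)‖²/(2β)` for every `z` (descent lemma plus
convexity), and the momentum `(s - 1)/(s + 2) = (λ_s - 1)/λ_{s+1}` is exactly what turns
`u_{s+1}` into `λ_s y_{s+1} - (λ_s - 1) y_s - x*`, so that `u_s` moves by `-(λ_s/β) ∇f(x_s)`.
Since `λ_1 = 1`, the potential at `s = 1` is at most `(β/2)‖x_1 - x*‖²`, which gives the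
bound for `t ≥ 2`; for `t = 1` it is the descent lemma at `x*`.
-/

open Set AffineMap
open scoped RealInnerProductSpace

section Module

variable {E : Type*} [AddCommGroup E] [Module ℝ E]

noncomputable def nesterovLyapunovPoint (x y : ℕ → E) (xstar : E) (s : ℕ) : E :=
  (((s : ℝ) + 1) / 2) • x s - (((s : ℝ) - 1) / 2) • y s - xstar

theorem nesterovLyapunovPoint_succ {x y : ℕ → E} (xstar : E) {s : ℕ}
    (hx : x (s + 1) = y (s + 1) + (((s : ℝ) - 1) / ((s : ℝ) + 2)) • (y (s + 1) - y s)) :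
    nesterovLyapunovPoint x y xstar (s + 1)
      = (((s : ℝ) + 1) / 2) • y (s + 1) - (((s : ℝ) - 1) / 2) • y s - xstar := by
  have hcoef : ((s : ℝ) + 1 + 1) / 2 * (((s : ℝ) - 1) / ((s : ℝ) + 2))
      = ((s : ℝ) - 1) / 2 := by
    field_simp
    ring
  rw [nesterovLyapunovPoint, hx, Nat.cast_succ, smul_add, smul_smul, hcoef]
  module

end Module

section Gradient

variable {E : Type*} [NormedAddCommGroup E] [InnerProductSpace ℝ E] [CompleteSpace E]
  {f : E → ℝ} {β : ℝ}

theorem DifferentiableAt.hasDerivAt_comp_lineMap {a b : E} {s : ℝ}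
    (hf : DifferentiableAt ℝ f (lineMap a b s)) :
    HasDerivAt (fun r : ℝ => f (lineMap a b r)) ⟪gradient f (lineMap a b s), b - a⟫ s := by
  rw [inner_gradient_left]
  exact hf.hasFDerivAt.comp_hasDerivAt s hasDerivAt_lineMap

theorem ConvexOn.add_inner_gradient_le (hconv : ConvexOn ℝ univ f)
    (hdiff : Differentiable ℝ f) (a b : E) :
    f a + ⟪gradient f a, b - a⟫ ≤ f b := by
  have hline : ConvexOn ℝ univ (fun r : ℝ => f (lineMap a b r)) :=
    hconv.comp_affineMap (lineMap a b)
  have hslope := hline.le_slope_of_hasDerivAt (mem_univ 0) (mem_univ 1) zero_lt_one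
    (hdiff _).hasDerivAt_comp_lineMap
  simp only [slope_def_field, lineMap_apply_zero, lineMap_apply_one, sub_zero, div_one]
    at hslope
  linarith

theorem le_add_inner_gradient_add_sq_of_lipschitz (hdiff : Differentiable ℝ f)
    (hsmooth : ∀ x y : E, ‖gradient f x - gradient f y‖ ≤ β * ‖x - y‖) (a b : E) :
    f b ≤ f a + ⟪gradient f a, b - a⟫ + β / 2 * ‖b - a‖ ^ 2 := by
  set φ : ℝ → ℝ := fun r =>
    f (lineMap a b r) - r * ⟪gradient f a, b - a⟫ - β / 2 * r ^ 2 * ‖b - a‖ ^ 2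
  have hφ' : ∀ r, HasDerivAt φ
      (⟪gradient f (lineMap a b r) - gradient f a, b - a⟫ - β * r * ‖b - a‖ ^ 2) r := by
    intro r
    refine (((hdiff _).hasDerivAt_comp_lineMap.sub ((hasDerivAt_id r).mul_const
      ⟪gradient f a, b - a⟫)).sub (((hasDerivAt_pow 2 r).const_mul (β / 2)).mul_const
      (‖b - a‖ ^ 2))).congr_deriv ?_
    rw [inner_sub_left]
    simp only [Nat.cast_ofNat]
    ring
  have hanti : AntitoneOn φ (Ici 0) := by
    refine antitoneOn_of_hasDerivWithinAt_nonpos (convex_Ici 0)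
      (HasDerivAt.continuousOn fun r _ => hφ' r) (fun r _ => (hφ' r).hasDerivWithinAt) ?_
    intro r hr
    rw [interior_Ici] at hr
    calc ⟪gradient f (lineMap a b r) - gradient f a, b - a⟫ - β * r * ‖b - a‖ ^ 2
        ≤ ‖gradient f (lineMap a b r) - gradient f a‖ * ‖b - a‖ - β * r * ‖b - a‖ ^ 2 := by
          gcongr
          exact real_inner_le_norm _ _
      _ ≤ β * ‖lineMap a b r - a‖ * ‖b - a‖ - β * r * ‖b - a‖ ^ 2 := by
          gcongr
          exact hsmooth _ _
      _ = 0 := by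
          rw [lineMap_apply, vsub_eq_sub, vadd_eq_add, add_sub_cancel_right, norm_smul,
            Real.norm_of_nonneg hr.out.le]
          ring
  have h01 := hanti self_mem_Ici (mem_Ici.2 zero_le_one) zero_le_one
  simp only [φ, lineMap_apply_zero, lineMap_apply_one] at h01
  linarith

theorem sub_le_of_isMin_of_lipschitz_gradient (hdiff : Differentiable ℝ f)
    (hsmooth : ∀ x y : E, ‖gradient f x - gradient f y‖ ≤ β * ‖x - y‖) {xstar : E}
    (hmin : ∀ x, f xstar ≤ f x) (b : E) :
    f b - f xstar ≤ β / 2 * ‖b - xstar‖ ^ 2 := by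
  have hgrad : gradient f xstar = 0 := by
    simp [gradient, IsLocalMin.fderiv_eq_zero (Filter.Eventually.of_forall hmin)]
  have h := le_add_inner_gradient_add_sq_of_lipschitz hdiff hsmooth xstar b
  rw [hgrad, inner_zero_left, add_zero] at h
  linarith

theorem gradient_step_le (hβ : 0 < β) (hconv : ConvexOn ℝ univ f)
    (hdiff : Differentiable ℝ f)
    (hsmooth : ∀ x y : E, ‖gradient f x - gradient f y‖ ≤ β * ‖x - y‖) (a z : E) :
    f (a - (1 / β) • gradient f a) ≤
      f z + ⟪gradient f a, a - z⟫ - 1 / (2 * β) * ‖gradient f a‖ ^ 2 := by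
  set g := gradient f a
  have hdescent := le_add_inner_gradient_add_sq_of_lipschitz hdiff hsmooth a (a - (1 / β) • g)
  have hconvex := hconv.add_inner_gradient_le hdiff a z
  rw [sub_sub_cancel_left, inner_neg_right, norm_neg, real_inner_smul_right,
    real_inner_self_eq_norm_sq, norm_smul, Real.norm_of_nonneg (by positivity)] at hdescent
  rw [← neg_sub, inner_neg_right] at hconvex
  have hquad : β / 2 * (1 / β * ‖g‖) ^ 2 = 1 / (2 * β) * ‖g‖ ^ 2 := by field_simp
  have hlin : 1 / β * ‖g‖ ^ 2 = 2 * (1 / (2 * β) * ‖g‖ ^ 2) := by field_simp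
  linarith

theorem nesterov_potential_step (hβ : 0 < β) (hconv : ConvexOn ℝ univ f)
    (hdiff : Differentiable ℝ f)
    (hsmooth : ∀ x y : E, ‖gradient f x - gradient f y‖ ≤ β * ‖x - y‖)
    {l : ℝ} (hl : 1 ≤ l) (a b z : E) :
    l ^ 2 * (f (a - (1 / β) • gradient f a) - f z)
        + β / 2 * ‖l • (a - (1 / β) • gradient f a) - (l - 1) • b - z‖ ^ 2
      ≤ (l ^ 2 - l) * (f b - f z) + β / 2 * ‖l • a - (l - 1) • b - z‖ ^ 2 := by
  set g := gradient f a
  set u := l • a - (l - 1) • b - z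
  have hu : l • (a - (1 / β) • g) - (l - 1) • b - z = u - (l / β) • g := by module
  have hnorm : β / 2 * ‖u - (l / β) • g‖ ^ 2
      = β / 2 * ‖u‖ ^ 2 - l * ⟪g, u⟫ + l ^ 2 * (1 / (2 * β) * ‖g‖ ^ 2) := by
    rw [norm_sub_sq_real, real_inner_smul_right, real_inner_comm, norm_smul, Real.norm_eq_abs,
      mul_pow, sq_abs]
    field_simp
  have hinner : ⟪g, u⟫ = (l - 1) * ⟪g, a - b⟫ + ⟪g, a - z⟫ := by
    simp only [u, inner_sub_right, real_inner_smul_right]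
    ring
  have hb := gradient_step_le hβ hconv hdiff hsmooth a b
  have hz := gradient_step_le hβ hconv hdiff hsmooth a z
  rw [hu, hnorm, hinner]
  nlinarith [mul_le_mul_of_nonneg_left hb (by nlinarith : 0 ≤ l * (l - 1)),
    mul_le_mul_of_nonneg_left hz (by linarith : 0 ≤ l)]

theorem nesterov_potential_succ_le (hβ : 0 < β) (hconv : ConvexOn ℝ univ f)
    (hdiff : Differentiable ℝ f)
    (hsmooth : ∀ x y : E, ‖gradient f x - gradient f y‖ ≤ β * ‖x - y‖)
    {x y : ℕ → E} (xstar : E) {s : ℕ} (hs : 1 ≤ s)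
    (hy : y (s + 1) = x s - (1 / β) • gradient f (x s))
    (hx : x (s + 1) = y (s + 1) + (((s : ℝ) - 1) / ((s : ℝ) + 2)) • (y (s + 1) - y s)) :
    (((s : ℝ) + 1) / 2) ^ 2 * (f (y (s + 1)) - f xstar)
        + β / 2 * ‖nesterovLyapunovPoint x y xstar (s + 1)‖ ^ 2
      ≤ ((((s : ℝ) + 1) / 2) ^ 2 - ((s : ℝ) + 1) / 2) * (f (y s) - f xstar)
        + β / 2 * ‖nesterovLyapunovPoint x y xstar s‖ ^ 2 := by
  have hl : 1 ≤ ((s : ℝ) + 1) / 2 := by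
    have : (1 : ℝ) ≤ s := by exact_mod_cast hs
    linarith
  have hl' : ((s : ℝ) - 1) / 2 = ((s : ℝ) + 1) / 2 - 1 := by ring
  rw [nesterovLyapunovPoint_succ xstar hx, nesterovLyapunovPoint, hy, hl']
  exact nesterov_potential_step hβ hconv hdiff hsmooth hl (x s) (y s) xstar

theorem nesterov_potential_le (hβ : 0 < β) (hconv : ConvexOn ℝ univ f)
    (hdiff : Differentiable ℝ f)
    (hsmooth : ∀ x y : E, ‖gradient f x - gradient f y‖ ≤ β * ‖x - y‖)
    {xstar : E} (hmin : ∀ x, f xstar ≤ f x) {x y : ℕ → E}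
    (hy : ∀ t : ℕ, 1 ≤ t → y (t + 1) = x t - (1 / β) • gradient f (x t))
    (hx : ∀ t : ℕ, 1 ≤ t →
      x (t + 1) = y (t + 1) + (((t : ℝ) - 1) / ((t : ℝ) + 2)) • (y (t + 1) - y t))
    {s : ℕ} (hs : 1 ≤ s) :
    (((s : ℝ) + 1) / 2) ^ 2 * (f (y (s + 1)) - f xstar)
        + β / 2 * ‖nesterovLyapunovPoint x y xstar (s + 1)‖ ^ 2 ≤ β / 2 * ‖x 1 - xstar‖ ^ 2 := by
  induction s, hs using Nat.le_induction with
  | base =>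
    have h := nesterov_potential_succ_le hβ hconv hdiff hsmooth xstar le_rfl (hy 1 le_rfl)
      (hx 1 le_rfl)
    norm_num [nesterovLyapunovPoint] at h ⊢
    exact h
  | succ s hs ih =>
    have h := nesterov_potential_succ_le hβ hconv hdiff hsmooth xstar (by omega)
      (hy (s + 1) (by omega)) (hx (s + 1) (by omega))
    have hcoef : ((((s + 1 : ℕ) : ℝ) + 1) / 2) ^ 2 - (((s + 1 : ℕ) : ℝ) + 1) / 2
        ≤ (((s : ℝ) + 1) / 2) ^ 2 := by
      push_cast
      nlinarith
    have := mul_le_mul_of_nonneg_right hcoef (sub_nonneg.2 (hmin (y (s + 1))))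
    linarith

end Gradient

/-- **Nesterov 1983.** For a convex `β`-smooth function `f` attaining its
minimum at `x*`, the iterates of Nesterov's Accelerated Gradient Descent
`y_{t+1} = x_t − (1/β)∇f(x_t)`, `x_{t+1} = y_{t+1} + ((t−1)/(t+2))(y_{t+1} − y_t)`
starting from `x_1 = y_1` satisfy `f(y_t) − f(x*) ≤ 2β‖x_1 − x*‖²/t²` for all `t ≥ 1`. -/
theorem stmt5 (n : ℕ) (f : EuclideanSpace ℝ (Fin n) → ℝ) (β : ℝ) (hβ : 0 < β)
    (hconv : ConvexOn ℝ Set.univ f)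
    (hdiff : Differentiable ℝ f)
    (hsmooth : ∀ x y : EuclideanSpace ℝ (Fin n),
      ‖gradient f x - gradient f y‖ ≤ β * ‖x - y‖)
    (xstar : EuclideanSpace ℝ (Fin n)) (hmin : ∀ x, f xstar ≤ f x)
    (x y : ℕ → EuclideanSpace ℝ (Fin n))
    (hinit : x 1 = y 1)
    (hy : ∀ t : ℕ, 1 ≤ t → y (t + 1) = x t - (1 / β) • gradient f (x t))
    (hx : ∀ t : ℕ, 1 ≤ t →
      x (t + 1) = y (t + 1) + (((t : ℝ) - 1) / ((t : ℝ) + 2)) • (y (t + 1) - y t)) :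
    ∀ t : ℕ, 1 ≤ t → f (y t) - f xstar ≤ 2 * β * ‖x 1 - xstar‖ ^ 2 / (t : ℝ) ^ 2 := by
  intro t ht
  rcases ht.eq_or_lt with rfl | ht
  · have h := sub_le_of_isMin_of_lipschitz_gradient hdiff hsmooth hmin (x 1)
    have : 0 ≤ β * ‖x 1 - xstar‖ ^ 2 := by positivity
    rw [← hinit]
    norm_num
    linarith
  · obtain ⟨s, hs, rfl⟩ : ∃ s, 1 ≤ s ∧ t = s + 1 := ⟨t - 1, by omega, by omega⟩
    have h := nesterov_potential_le hβ hconv hdiff hsmooth hmin hy hx hs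
    have : 0 ≤ β / 2 * ‖nesterovLyapunovPoint x y xstar (s + 1)‖ ^ 2 := by positivity
    rw [le_div_iff₀ (by positivity)]
    push_cast
    nlinarith
end

section
/- Let s, t ∈ ℝ with 0 < s ≤ 1/√2 and |t| ≤ (1 − √(1 − s²))(1 − s²)/(2√(1 − s²) + 1/2). Then 1 ≥ t²/(1 − s²) + √(1 − s² + t²/(1 − s²)) + s|t|/√(1 − s²); equivalently, ((1/2)·√(1 − s² + t²/(1 − s²)) + 1/2)² + (s/2 + |t|/(2√(1 − s²)))² ≤ 1. -/
/-!
Put `c = √(1 - s²)` and `v = |t| / c`, so that the left-hand side of the first inequality is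
`v² + √(c² + v²) + s v`. The square root is at most `c + v² / (2c)`, and the hypothesis on `|t|`
reads `v (4c + 1) ≤ 2c (1 - c)`; it forces `v ≤ 1`, and together with `s ≤ 1` this gives the
inequality after multiplying by `2c`. The second inequality is the first one in disguise: when
`r² = 1 - s² + v²`, one has `(r/2 + 1/2)² + (s/2 + v/2)² = 1/2 + (v² + r + s v)/2`.
-/

open Real

lemma Real.sqrt_sq_add_sq_le {c : ℝ} (hc : 0 < c) (v : ℝ) :
    √(c ^ 2 + v ^ 2) ≤ c + v ^ 2 / (2 * c) := by
  have hw : 2 * c * (v ^ 2 / (2 * c)) = v ^ 2 := mul_div_cancel₀ _ (by positivity)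
  rw [sqrt_le_iff]
  exact ⟨by positivity, by nlinarith [sq_nonneg (v ^ 2 / (2 * c))]⟩

lemma sq_add_sqrt_add_mul_le_one {c v s : ℝ} (hc : 0 < c) (hv : 0 ≤ v) (hs : s ≤ 1)
    (h : v * (2 * c + 1 / 2) ≤ (1 - c) * c) :
    v ^ 2 + √(c ^ 2 + v ^ 2) + s * v ≤ 1 := by
  have hv_le : v ≤ 1 := by nlinarith [sq_nonneg (c - 1 / 2)]
  have hw : 2 * c * (v ^ 2 / (2 * c)) = v ^ 2 := mul_div_cancel₀ _ (by positivity)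
  have hbound : v ^ 2 + (c + v ^ 2 / (2 * c)) + s * v ≤ 1 := by
    refine le_of_mul_le_mul_left ?_ (by positivity : 0 < 2 * c)
    nlinarith [mul_le_mul_of_nonneg_left hv_le (by positivity : 0 ≤ v * (2 * c + 1)),
      mul_le_mul_of_nonneg_left hs (by positivity : 0 ≤ 2 * c * v)]
  linarith [sqrt_sq_add_sq_le hc v]

/-- For `0 < s ≤ 1/√2` and
`|t| ≤ (1 − √(1 − s²))(1 − s²)/(2√(1 − s²) + 1/2)`, one has
`1 ≥ t²/(1 − s²) + √(1 − s² + t²/(1 − s²)) + s|t|/√(1 − s²)`; equivalently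
`((1/2)√(1 − s² + t²/(1 − s²)) + 1/2)² + (s/2 + |t|/(2√(1 − s²)))² ≤ 1`. -/
theorem stmt13 (s t : ℝ) (h0 : 0 < s) (h1 : s ≤ 1 / Real.sqrt 2)
    (ht : |t| ≤ (1 - Real.sqrt (1 - s ^ 2)) * (1 - s ^ 2)
      / (2 * Real.sqrt (1 - s ^ 2) + 1 / 2)) :
    (t ^ 2 / (1 - s ^ 2) + Real.sqrt (1 - s ^ 2 + t ^ 2 / (1 - s ^ 2))
        + s * |t| / Real.sqrt (1 - s ^ 2) ≤ 1) ∧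
    ((1 / 2) * Real.sqrt (1 - s ^ 2 + t ^ 2 / (1 - s ^ 2)) + 1 / 2) ^ 2
        + (s / 2 + |t| / (2 * Real.sqrt (1 - s ^ 2))) ^ 2 ≤ 1 := by
  have hs : s ^ 2 ≤ 1 / 2 := by
    simpa [div_pow] using pow_le_pow_left₀ h0.le h1 2
  have hc : 0 < √(1 - s ^ 2) := sqrt_pos.2 (by linarith)
  have hc2 : √(1 - s ^ 2) ^ 2 = 1 - s ^ 2 := sq_sqrt (by linarith)
  generalize √(1 - s ^ 2) = c at hc hc2 ht ⊢
  rw [← hc2] at ht ⊢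
  set v := |t| / c
  have hv : v * (2 * c + 1 / 2) ≤ (1 - c) * c := by
    rw [le_div_iff₀ (by positivity)] at ht
    rw [div_mul_eq_mul_div, div_le_iff₀ hc]
    linarith
  have key := sq_add_sqrt_add_mul_le_one (s := s) hc (by positivity) (by nlinarith) hv
  have hr := sq_sqrt (by positivity : 0 ≤ c ^ 2 + v ^ 2)
  rw [show t ^ 2 / c ^ 2 = v ^ 2 by rw [div_pow, sq_abs], mul_div_assoc,
    show |t| / (2 * c) = v / 2 by rw [mul_comm, ← div_div]]
  exact ⟨key, by linarith⟩
end

section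
/- Let s, t ∈ ℝ with 0 < s ≤ 1/√2 and |t| ≤ s²/10. Then √(S² + T²) < 1, where S = (1/2)·√((√((1−s²)² + 4t²) + 1 − s²)/2) + 1/2 and T = (1/2)·√((√((1−s²)² + 4t²) − 1 + s²)/2) + s/2. -/
/-!
With `a = 1 - s²` and `D = √(a² + 4t²)`, the numbers `x = √((D + a)/2)` and `y = √((D - a)/2)` are
the real and imaginary parts of a square root of `a + 2ti`: `x² - y² = a` and `xy = |t|`.
Since `x² + y² = D`, the claim becomes `(x + 1)² + (y + s)² < 4`, i.e. `x + y² + sy < 1`.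
Now `x² ≥ a ≥ 1/2` and `xy ≤ s²/10` force `y ≤ s/10`, and then `x = √(1 - s² + y²)` is below
`1 - y² - sy`.
-/

lemma sq_sqrt_half_add_sub_sq_sqrt_half_sub {a D : ℝ} (h : |a| ≤ D) :
    √((D + a) / 2) ^ 2 - √((D - a) / 2) ^ 2 = a := by
  rw [Real.sq_sqrt (by linarith [neg_abs_le a]), Real.sq_sqrt (by linarith [le_abs_self a])]
  ring

lemma sqrt_half_add_mul_sqrt_half_sub {a D : ℝ} (h : |a| ≤ D) :
    √((D + a) / 2) * √((D - a) / 2) = √(D ^ 2 - a ^ 2) / 2 := by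
  rw [← Real.sqrt_mul (by linarith [neg_abs_le a])]
  have hmul : (D + a) / 2 * ((D - a) / 2) = (D ^ 2 - a ^ 2) / 2 ^ 2 := by ring
  rw [hmul, Real.sqrt_div' _ (by norm_num : (0 : ℝ) ≤ 2 ^ 2), Real.sqrt_sq (by norm_num)]

lemma le_div_ten_of_sq_sub_sq_eq_of_mul_le {x y s : ℝ} (hx : 0 ≤ x) (hy : 0 ≤ y) (hs : 0 ≤ s)
    (hs2 : s ^ 2 ≤ 1 / 2) (hdiff : x ^ 2 - y ^ 2 = 1 - s ^ 2) (hprod : x * y ≤ s ^ 2 / 10) :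
    y ≤ s / 10 := by
  have hx2 : 1 / 2 ≤ x ^ 2 := by nlinarith
  have hprod2 : x ^ 2 * y ^ 2 ≤ s ^ 4 / 100 := by
    rw [← mul_pow]; nlinarith [mul_nonneg hx hy]
  refine (pow_le_pow_iff_left₀ hy (by positivity) two_ne_zero).1 ?_
  nlinarith [sq_nonneg y, sq_nonneg s]

lemma add_one_sq_add_add_sq_lt_four {x y s : ℝ} (hx : 0 ≤ x) (hy : 0 ≤ y) (hs : 0 < s)
    (hs2 : s ^ 2 ≤ 1 / 2) (hdiff : x ^ 2 - y ^ 2 = 1 - s ^ 2) (hprod : x * y ≤ s ^ 2 / 10) :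
    (x + 1) ^ 2 + (y + s) ^ 2 < 4 := by
  have hy_le := le_div_ten_of_sq_sub_sq_eq_of_mul_le hx hy hs.le hs2 hdiff hprod
  have hs1 : s ≤ 1 := by nlinarith
  have hx_lt : x < 1 - y ^ 2 - s * y := by
    have hpos : 0 ≤ 1 - y ^ 2 - s * y := by nlinarith
    refine lt_of_pow_lt_pow_left₀ 2 hpos ?_
    nlinarith [mul_nonneg hy hs.le, mul_nonneg (sq_nonneg y) (mul_nonneg hy hs.le)]
  nlinarith

/-- For `0 < s ≤ 1/√2` and `|t| ≤ s²/10`, the eigenvalue bounds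
`S = (1/2)√((√((1−s²)² + 4t²) + 1 − s²)/2) + 1/2` and
`T = (1/2)√((√((1−s²)² + 4t²) − 1 + s²)/2) + s/2` satisfy `√(S² + T²) < 1`. -/
theorem stmt14 (s t : ℝ) (h0 : 0 < s) (h1 : s ≤ 1 / Real.sqrt 2)
    (ht : |t| ≤ s ^ 2 / 10) :
    Real.sqrt
        (((1 / 2) * Real.sqrt ((Real.sqrt ((1 - s ^ 2) ^ 2 + 4 * t ^ 2) + 1 - s ^ 2) / 2)
            + 1 / 2) ^ 2
          + ((1 / 2) * Real.sqrt ((Real.sqrt ((1 - s ^ 2) ^ 2 + 4 * t ^ 2) - 1 + s ^ 2) / 2)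
            + s / 2) ^ 2)
      < 1 := by
  have hs2 : s ^ 2 ≤ 1 / 2 := by
    have h := pow_le_pow_left₀ h0.le h1 2
    rwa [div_pow, one_pow, Real.sq_sqrt zero_le_two] at h
  set D := √((1 - s ^ 2) ^ 2 + 4 * t ^ 2)
  have hD : |1 - s ^ 2| ≤ D := Real.abs_le_sqrt (by nlinarith)
  have hD2 : D ^ 2 - (1 - s ^ 2) ^ 2 = (2 * t) ^ 2 := by
    rw [Real.sq_sqrt (by positivity)]; ring
  rw [show D + 1 - s ^ 2 = D + (1 - s ^ 2) by ring, show D - 1 + s ^ 2 = D - (1 - s ^ 2) by ring]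
  have hdiff := sq_sqrt_half_add_sub_sq_sqrt_half_sub hD
  have hprod := sqrt_half_add_mul_sqrt_half_sub hD
  rw [hD2, Real.sqrt_sq_eq_abs, abs_mul, abs_two] at hprod
  have key := add_one_sq_add_add_sq_lt_four (Real.sqrt_nonneg _) (Real.sqrt_nonneg _) h0 hs2
    hdiff (by linarith)
  rw [Real.sqrt_lt' one_pos]
  nlinarith
end

section
/- Let s, t ∈ ℝ with 1/√2 < s ≤ 1 and |t| ≤ s²/10. Then √(S² + T²) < 1, where S = (1/2)·√((√((1−s²)² + 4t²) + 1 − s²)/2) + 1/2 and T = (1/2)·√((√((1−s²)² + 4t²) − 1 + s²)/2) + s/2. -/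
/-!
Write `p = 1 - s² ≥ 0` and `u = √(p² + 4t²)`, so that the two inner square roots are the
real and imaginary parts `A = √((u + p)/2)`, `B = √((u - p)/2)` of `√(p + 2it)`. Since
`p ≤ u ≤ p + 2|t|`, we get `A² ≤ p + |t| ≤ 1 - 9s²/10` and `B² ≤ |t| ≤ s²/10`. The claim
`(A + 1)² + (B + s)² < 4` then follows from `s² > 1/2` after the AM-GM estimates
`2A ≤ 4A²/3 + 3/4` and `2Bs ≤ 3B² + s²/3`.
-/

namespace Real

theorem abs_le_sqrt_sq_add_four_mul_sq (p t : ℝ) : |p| ≤ √(p ^ 2 + 4 * t ^ 2) :=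
  abs_le_sqrt (by nlinarith [sq_nonneg t])

theorem sqrt_sq_add_four_mul_sq_le {p : ℝ} (t : ℝ) (hp : 0 ≤ p) :
    √(p ^ 2 + 4 * t ^ 2) ≤ p + 2 * |t| := by
  rw [sqrt_le_left (by positivity)]
  nlinarith [sq_abs t, abs_nonneg t]

theorem sq_sqrt_half_add_le {p : ℝ} (t : ℝ) (hp : 0 ≤ p) :
    √((√(p ^ 2 + 4 * t ^ 2) + p) / 2) ^ 2 ≤ p + |t| := by
  have hlow := abs_le_sqrt_sq_add_four_mul_sq p t
  have hup := sqrt_sq_add_four_mul_sq_le t hp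
  rw [sq_sqrt (by linarith [neg_abs_le p])]
  linarith

theorem sq_sqrt_half_sub_le {p : ℝ} (t : ℝ) (hp : 0 ≤ p) :
    √((√(p ^ 2 + 4 * t ^ 2) - p) / 2) ^ 2 ≤ |t| := by
  have hlow := abs_le_sqrt_sq_add_four_mul_sq p t
  have hup := sqrt_sq_add_four_mul_sq_le t hp
  rw [sq_sqrt (by linarith [le_abs_self p])]
  linarith

end Real

theorem half_add_sq_add_half_add_sq_lt_one {a b s : ℝ} (hs : 1 / 2 < s ^ 2)
    (ha : a ^ 2 ≤ 1 - 9 * s ^ 2 / 10) (hb : 10 * b ^ 2 ≤ s ^ 2) :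
    ((1 / 2) * a + 1 / 2) ^ 2 + ((1 / 2) * b + s / 2) ^ 2 < 1 := by
  nlinarith [sq_nonneg (4 * a - 3), sq_nonneg (3 * b - s)]

theorem one_half_lt_sq_of_inv_sqrt_two_lt {s : ℝ} (h : 1 / √2 < s) : 1 / 2 < s ^ 2 := by
  have h2 := pow_lt_pow_left₀ h (by positivity) two_ne_zero
  rwa [div_pow, one_pow, Real.sq_sqrt zero_le_two] at h2

/-- For `1/√2 < s ≤ 1` and `|t| ≤ s²/10`, the eigenvalue bounds
`S = (1/2)√((√((1−s²)² + 4t²) + 1 − s²)/2) + 1/2` and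
`T = (1/2)√((√((1−s²)² + 4t²) − 1 + s²)/2) + s/2` satisfy `√(S² + T²) < 1`. -/
theorem stmt15 (s t : ℝ) (h0 : 1 / Real.sqrt 2 < s) (h1 : s ≤ 1)
    (ht : |t| ≤ s ^ 2 / 10) :
    Real.sqrt
        (((1 / 2) * Real.sqrt ((Real.sqrt ((1 - s ^ 2) ^ 2 + 4 * t ^ 2) + 1 - s ^ 2) / 2)
            + 1 / 2) ^ 2
          + ((1 / 2) * Real.sqrt ((Real.sqrt ((1 - s ^ 2) ^ 2 + 4 * t ^ 2) - 1 + s ^ 2) / 2)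
            + s / 2) ^ 2)
      < 1 := by
  have hs : 0 < s := (by positivity : (0 : ℝ) < 1 / √2).trans h0
  have hs2 : 1 / 2 < s ^ 2 := one_half_lt_sq_of_inv_sqrt_two_lt h0
  have hp : 0 ≤ 1 - s ^ 2 := by nlinarith
  have hA := Real.sq_sqrt_half_add_le t hp
  have hB := Real.sq_sqrt_half_sub_le t hp
  rw [← add_sub_assoc] at hA
  rw [sub_sub_eq_add_sub, add_sub_right_comm] at hB
  rw [Real.sqrt_lt' one_pos, one_pow]
  exact half_add_sq_add_half_add_sq_lt_one hs2 (by linarith) (by linarith)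
end
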